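/- arXiv:1412.8737 — 2 statements merged into one kernel-verified Lean document; each statement's English description precedes it below -/
import Mathlib

section
/- Let $0 \to S \to \mathbb{Z}^k \to A \to 0$ be a short exact sequence of abelian groups. Then the minimal number of generators in an invariant factor decomposition of $A$ (the number of invariant factors of $A$) is strictly smaller than $k$ if and only if there exists an element $a \in S$ that is primitive in $\mathbb{Z}^k$. -/
/-!
Smith normal form gives a basis `b` of `ℤᵏ` and integers `dᵢ` with `S = {x | dᵢ ∣ bᵢ(x)}`, so
`A ≅ ∏ ℤ/dᵢ`; repeatedly replacing `ℤ/a × ℤ/b` by `ℤ/gcd(a,b) × ℤ/lcm(a,b)` turns this into an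
invariant factor decomposition. Hence a group generated by `r` elements has at most `r` invariant
factors.

If `a ∈ S` is primitive, with `g a = 1`, then `ℤᵏ = ℤa ⊕ ker g` and `π` maps `ker g ≅ ℤᵏ⁻¹` onto
`A`. If `S` contains no primitive element, the element `∑ dᵢ bᵢ ∈ S` shows that `gcd dᵢ ≠ 1`, so
some prime `p` divides every `dᵢ`, `S ⊆ pℤᵏ`, and `A` maps onto `(ℤ/p)ᵏ`. A group with `r`
invariant factors is a quotient of `ℤʳ`, and `ℤʳ ↠ (ℤ/p)ᵏ` forces `k ≤ r` by counting
`(ℤ/p)ʳ ↠ (ℤ/p)ᵏ`.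
-/

/-- The number of invariant factors of a finitely generated abelian group `A`:
the minimal number `r` of cyclic summands in a decomposition
`A ≅ ℤ/m₁ ⊕ ⋯ ⊕ ℤ/m_r` with `m₁ ∣ m₂ ∣ ⋯ ∣ m_r` (where `ℤ/0 = ℤ`). -/
noncomputable def invariantFactorCount (A : Type*) [AddCommGroup A] : ℕ :=
  sInf {r : ℕ | ∃ m : Fin r → ℕ, (∀ i j : Fin r, i ≤ j → m i ∣ m j) ∧
    Nonempty (A ≃+ ((i : Fin r) → ZMod (m i)))}

/-- An element `a` of `ℤ^k` is primitive if `ℤ → ℤ^k`, `1 ↦ a`, is a split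
monomorphism, i.e. there is `g : ℤ^k → ℤ` with `g a = 1`. -/
def IsPrimitive {k : ℕ} (a : Fin k → ℤ) : Prop :=
  ∃ g : (Fin k → ℤ) →+ ℤ, g a = 1

open Module

def IsDvdChain {r : ℕ} (m : Fin r → ℕ) : Prop :=
  ∀ i j, i ≤ j → m i ∣ m j

theorem IsDvdChain.tail {r : ℕ} {m : Fin (r + 1) → ℕ} (hm : IsDvdChain m) :
    IsDvdChain fun i => m i.succ :=
  fun i j hij => hm i.succ j.succ (Fin.succ_le_succ_iff.2 hij)

theorem IsDvdChain.cons {r : ℕ} {m : Fin r → ℕ} (hm : IsDvdChain m) {a : ℕ} (ha : ∀ i, a ∣ m i) :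
    IsDvdChain (Fin.cons a m : Fin (r + 1) → ℕ) := by
  refine Fin.cases (Fin.cases ?_ fun j _ => ?_) fun i => Fin.cases ?_ fun j hij => ?_
  · exact fun _ => dvd_rfl
  · exact ha j
  · exact fun h => absurd h (by simp)
  · exact hm i j (Fin.succ_le_succ_iff.1 hij)

def HasInvariantFactorDecomposition (A : Type*) [AddCommGroup A] (r : ℕ) : Prop :=
  ∃ m : Fin r → ℕ, IsDvdChain m ∧ Nonempty (A ≃+ ∀ i, ZMod (m i))

theorem invariantFactorCount_le {A : Type*} [AddCommGroup A] {r : ℕ}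
    (h : HasInvariantFactorDecomposition A r) : invariantFactorCount A ≤ r :=
  Nat.sInf_le h

theorem hasInvariantFactorDecomposition_invariantFactorCount {A : Type*} [AddCommGroup A] {r : ℕ}
    (h : HasInvariantFactorDecomposition A r) :
    HasInvariantFactorDecomposition A (invariantFactorCount A) :=
  Nat.sInf_mem (s := {r | HasInvariantFactorDecomposition A r}) ⟨r, h⟩

theorem AddMonoidHom.nonempty_addEquiv_of_ker_eq {M P Q : Type*} [AddGroup M] [AddGroup P]
    [AddGroup Q] {φ : M →+ P} {ψ : M →+ Q} (hφ : Function.Surjective φ)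
    (hψ : Function.Surjective ψ) (h : φ.ker = ψ.ker) : Nonempty (P ≃+ Q) :=
  ⟨(QuotientAddGroup.quotientKerEquivOfSurjective φ hφ).symm.trans
    ((QuotientAddGroup.quotientAddEquivOfEq h).trans
      (QuotientAddGroup.quotientKerEquivOfSurjective ψ hψ))⟩

theorem AddMonoidHom.exists_surjective_of_ker_le {M P Q : Type*} [AddGroup M] [AddGroup P]
    [AddGroup Q] {φ : M →+ P} {ψ : M →+ Q} (hφ : Function.Surjective φ)
    (hψ : Function.Surjective ψ) (h : φ.ker ≤ ψ.ker) :
    ∃ χ : P →+ Q, Function.Surjective χ := by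
  refine ⟨φ.liftOfRightInverse _ (Function.rightInverse_surjInv hφ) ⟨ψ, h⟩, ?_⟩
  refine Function.Surjective.of_comp (g := φ) ?_
  rwa [← AddMonoidHom.coe_comp, AddMonoidHom.liftOfRightInverse_comp]

def piIntCastAddHom {ι : Type*} (m : ι → ℕ) : (ι → ℤ) →+ ∀ i, ZMod (m i) :=
  AddMonoidHom.piMap fun i => Int.castAddHom (ZMod (m i))

theorem piIntCastAddHom_surjective {ι : Type*} (m : ι → ℕ) :
    Function.Surjective (piIntCastAddHom m) :=
  fun y => ⟨fun i => (y i).cast, funext fun i => ZMod.intCast_zmod_cast (y i)⟩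

theorem mem_ker_piIntCastAddHom {ι : Type*} {m : ι → ℕ} {x : ι → ℤ} :
    x ∈ (piIntCastAddHom m).ker ↔ ∀ i, (m i : ℤ) ∣ x i := by
  simp [piIntCastAddHom, funext_iff, ZMod.intCast_zmod_eq_zero_iff_dvd]

theorem Submodule.exists_basis_mem_iff_forall_dvd_repr {ι R M : Type*} [CommRing R] [IsDomain R]
    [IsPrincipalIdealRing R] [AddCommGroup M] [Module R M] [Finite ι]
    (b : Basis ι R M) (N : Submodule R M) :
    ∃ (b' : Basis ι R M) (d : ι → R), ∀ x, x ∈ N ↔ ∀ i, d i ∣ b'.repr x i := by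
  obtain ⟨n, snf⟩ := N.smithNormalForm b
  have repr_f (y : N) (j : Fin n) : snf.bM.repr y (snf.f j) = snf.a j * snf.bN.repr y j :=
    congrFun (snf.repr_comp_embedding_eq_smul y) j
  refine ⟨snf.bM, Function.extend snf.f snf.a 0, fun x => ⟨fun hx i => ?_, fun hx => ?_⟩⟩
  · by_cases hi : i ∈ Set.range snf.f
    · obtain ⟨j, rfl⟩ := hi
      rw [snf.f.injective.extend_apply, repr_f ⟨x, hx⟩]
      exact dvd_mul_right _ _
    · rw [snf.repr_eq_zero_of_notMem_range ⟨x, hx⟩ hi]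
      exact dvd_zero _
  · choose c hc using hx
    set y : N := ∑ j, c (snf.f j) • snf.bN j
    convert y.2
    refine snf.bM.ext_elem fun i => ?_
    by_cases hi : i ∈ Set.range snf.f
    · obtain ⟨j, rfl⟩ := hi
      rw [hc, repr_f, snf.bN.repr_sum_self, snf.f.injective.extend_apply]
    · rw [snf.repr_eq_zero_of_notMem_range y hi, hc,
        Function.extend_apply' _ _ _ (by simpa using hi), Pi.zero_apply, zero_mul]

theorem exists_addEquiv_pi_zmod_of_surjective {ι M A : Type*} [Finite ι] [AddCommGroup M]
    [AddCommGroup A] (b : Basis ι ℤ M) {π : M →+ A} (hπ : Function.Surjective π) :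
    ∃ d : ι → ℕ, Nonempty (A ≃+ ∀ i, ZMod (d i)) := by
  obtain ⟨b', d, hd⟩ := Submodule.exists_basis_mem_iff_forall_dvd_repr b π.ker.toIntSubmodule
  refine ⟨fun i => (d i).natAbs, AddMonoidHom.nonempty_addEquiv_of_ker_eq hπ
    (ψ := (piIntCastAddHom _).comp b'.equivFun.toLinearMap.toAddMonoidHom)
    ((piIntCastAddHom_surjective _).comp b'.equivFun.surjective) (AddSubgroup.ext fun x => ?_)⟩
  change _ ↔ b'.equivFun x ∈ (piIntCastAddHom fun i => (d i).natAbs).ker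
  rw [mem_ker_piIntCastAddHom]
  exact (hd x).trans (forall_congr' fun i => Int.natAbs_dvd.symm)

theorem Int.dvd_and_dvd_iff_of_mul_add_mul_eq_one {g a b u v x y : ℤ} (h : u * a + v * b = 1) :
    g ∣ u * x + v * y ∧ a * b * g ∣ a * y - b * x ↔ a * g ∣ x ∧ b * g ∣ y := by
  constructor
  · rintro ⟨⟨X, hX⟩, ⟨Y, hY⟩⟩
    exact ⟨⟨X - v * b * Y, by linear_combination -x * h + a * hX - v * hY⟩,
      ⟨X + u * a * Y, by linear_combination -y * h + b * hX + u * hY⟩⟩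
  · rintro ⟨⟨s, rfl⟩, ⟨t, rfl⟩⟩
    exact ⟨⟨u * a * s + v * b * t, by ring⟩, ⟨t - s, by ring⟩⟩

theorem ZMod.nonempty_prod_addEquiv_of_coprime {g a b : ℕ} (hab : a.Coprime b) :
    Nonempty (ZMod (a * g) × ZMod (b * g) ≃+ ZMod g × ZMod (a * b * g)) := by
  obtain ⟨u, v, huv⟩ := Nat.isCoprime_iff_coprime.2 hab
  let φ : ℤ × ℤ →+ ZMod (a * g) × ZMod (b * g) := (Int.castAddHom _).prodMap (Int.castAddHom _)
  -- `(x, y) ↦ (u x + v y, a y - b x)` is invertible over `ℤ` and maps `ag ℤ × bg ℤ` onto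
  -- `g ℤ × abg ℤ`, so `φ` and `ψ` have the same kernel
  let ψ : ℤ × ℤ →+ ZMod g × ZMod (a * b * g) := AddMonoidHom.mk'
    (fun p => (((u * p.1 + v * p.2 : ℤ) : ZMod g), ((a * p.2 - b * p.1 : ℤ) : ZMod (a * b * g))))
    (fun p q => by ext <;> simp only [Prod.fst_add, Prod.snd_add] <;> push_cast <;> ring)
  have hφ : Function.Surjective φ := ZMod.intCast_surjective.prodMap ZMod.intCast_surjective
  have hψ : Function.Surjective ψ := by
    rintro ⟨s, t⟩
    obtain ⟨X, rfl⟩ := ZMod.intCast_surjective s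
    obtain ⟨Y, rfl⟩ := ZMod.intCast_surjective t
    refine ⟨(a * X - v * Y, b * X + u * Y), Prod.ext ?_ ?_⟩
    · show (((u * (a * X - v * Y) + v * (b * X + u * Y)) : ℤ) : ZMod g) = X
      congr 1; linear_combination X * huv
    · show (((a * (b * X + u * Y) - b * (a * X - v * Y)) : ℤ) : ZMod (a * b * g)) = Y
      congr 1; linear_combination Y * huv
  refine AddMonoidHom.nonempty_addEquiv_of_ker_eq hφ hψ (AddSubgroup.ext fun ⟨x, y⟩ => ?_)
  change ((x : ZMod (a * g)), (y : ZMod (b * g))) = 0 ↔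
    (((u * x + v * y : ℤ) : ZMod g), ((a * y - b * x : ℤ) : ZMod (a * b * g))) = 0
  simp only [Prod.mk_eq_zero, ZMod.intCast_zmod_eq_zero_iff_dvd, Nat.cast_mul]
  exact (Int.dvd_and_dvd_iff_of_mul_add_mul_eq_one huv).symm

theorem ZMod.nonempty_prod_addEquiv_gcd_lcm (a b : ℕ) :
    Nonempty (ZMod a × ZMod b ≃+ ZMod (a.gcd b) × ZMod (a.lcm b)) := by
  rcases Nat.eq_zero_or_pos (a.gcd b) with h | h
  · obtain ⟨rfl, rfl⟩ := Nat.gcd_eq_zero_iff.1 h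
    rw [h, Nat.lcm_zero_left]
    exact ⟨.refl _⟩
  · obtain ⟨g, a, b, -, hab, rfl, rfl⟩ := Nat.exists_coprime' h
    rw [Nat.gcd_mul_right, hab.gcd_eq_one, one_mul, Nat.lcm_mul_right, hab.lcm_eq_mul]
    exact ZMod.nonempty_prod_addEquiv_of_coprime hab

theorem IsDvdChain.exists_addEquiv_prod {r : ℕ} {m : Fin r → ℕ} (hm : IsDvdChain m) (b : ℕ) :
    ∃ m' : Fin (r + 1) → ℕ, IsDvdChain m' ∧ (∀ c, c ∣ b → (∀ i, c ∣ m i) → ∀ i, c ∣ m' i) ∧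
      Nonempty (ZMod b × (∀ i, ZMod (m i)) ≃+ ∀ i, ZMod (m' i)) := by
  induction r generalizing b with
  | zero =>
    refine ⟨fun _ => b, fun _ _ _ => dvd_rfl, fun c hc _ _ => hc, ?_⟩
    exact ⟨AddEquiv.prodUnique.trans (AddEquiv.piUnique fun _ : Fin 1 => ZMod b).symm⟩
  | succ r ih =>
    -- `(b, m 0)` is replaced by `(gcd, lcm)`, and the `lcm` is inserted into the tail of `m`
    set g := b.gcd (m 0)
    set l := b.lcm (m 0)
    obtain ⟨m', hm', hdvd, ⟨e⟩⟩ := ih hm.tail l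
    have hg : ∀ i, g ∣ m' i := hdvd _ ((Nat.gcd_dvd_left _ _).trans (Nat.dvd_lcm_left _ _))
      fun i => (Nat.gcd_dvd_right _ _).trans (hm 0 i.succ (Fin.zero_le _))
    refine ⟨Fin.cons g m', hm'.cons hg, fun c hcb hcm i => ?_, ?_⟩
    · cases i using Fin.cases with
      | zero => exact Nat.dvd_gcd hcb (hcm 0)
      | succ i => exact hdvd c (hcb.trans (Nat.dvd_lcm_left _ _)) (fun i => hcm i.succ) i
    · obtain ⟨e₀⟩ := ZMod.nonempty_prod_addEquiv_gcd_lcm b (m 0)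
      let e₁ : ZMod b × (∀ i, ZMod (m i)) ≃+ (ZMod b × ZMod (m 0)) × ∀ i : Fin r, ZMod (m i.succ) :=
        ((AddEquiv.refl _).prodCongr (Fin.consLinearEquiv ℤ _).toAddEquiv.symm).trans
          AddEquiv.prodAssoc.symm
      let e₂ : (ZMod g × ZMod l) × (∀ i : Fin r, ZMod (m i.succ)) ≃+
          ∀ i, ZMod ((Fin.cons g m' : Fin (r + 2) → ℕ) i) :=
        (AddEquiv.prodAssoc.trans ((AddEquiv.refl _).prodCongr e)).trans
          (Fin.consLinearEquiv ℤ fun i => ZMod ((Fin.cons g m' : Fin (r + 2) → ℕ) i)).toAddEquiv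
      exact ⟨e₁.trans ((e₀.prodCongr (.refl _)).trans e₂)⟩

theorem exists_isDvdChain_addEquiv_pi {r : ℕ} (d : Fin r → ℕ) :
    ∃ m : Fin r → ℕ, IsDvdChain m ∧ Nonempty ((∀ i, ZMod (d i)) ≃+ ∀ i, ZMod (m i)) := by
  induction r with
  | zero => exact ⟨d, fun i => i.elim0, ⟨.refl _⟩⟩
  | succ r ih =>
    obtain ⟨m, hm, ⟨e⟩⟩ := ih fun i => d i.succ
    obtain ⟨m', hm', -, ⟨e'⟩⟩ := hm.exists_addEquiv_prod (d 0)
    exact ⟨m', hm', ⟨(Fin.consLinearEquiv ℤ _).toAddEquiv.symm.trans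
      (((AddEquiv.refl _).prodCongr e).trans e')⟩⟩

theorem hasInvariantFactorDecomposition_of_surjective {r : ℕ} {A : Type*} [AddCommGroup A]
    {π : (Fin r → ℤ) →+ A} (hπ : Function.Surjective π) : HasInvariantFactorDecomposition A r := by
  obtain ⟨d, ⟨e⟩⟩ := exists_addEquiv_pi_zmod_of_surjective (Pi.basisFun ℤ (Fin r)) hπ
  obtain ⟨m, hm, ⟨e'⟩⟩ := exists_isDvdChain_addEquiv_pi d
  exact ⟨m, hm, ⟨e.trans e'⟩⟩

theorem le_of_surjective_pi_zmod {n r k : ℕ} (hn : 1 < n) {f : (Fin r → ℤ) →+ (Fin k → ZMod n)}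
    (hf : Function.Surjective f) : k ≤ r := by
  have : NeZero n := ⟨by omega⟩
  have hker : (piIntCastAddHom fun _ : Fin r => n).ker ≤ f.ker := by
    intro x hx
    choose q hq using mem_ker_piIntCastAddHom.1 hx
    have hx : x = (n : ℤ) • q := funext hq
    rw [AddMonoidHom.mem_ker, hx, map_zsmul]
    ext i
    simp
  obtain ⟨χ, hχ⟩ := AddMonoidHom.exists_surjective_of_ker_le (piIntCastAddHom_surjective _) hf hker
  simpa [Nat.pow_le_pow_iff_right hn] using Fintype.card_le_of_surjective χ hχ

theorem HasInvariantFactorDecomposition.le_of_surjective {A : Type*} [AddCommGroup A] {r n k : ℕ}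
    (hA : HasInvariantFactorDecomposition A r) (hn : 1 < n) {ψ : A →+ (Fin k → ZMod n)}
    (hψ : Function.Surjective ψ) : k ≤ r := by
  obtain ⟨m, -, ⟨e⟩⟩ := hA
  exact le_of_surjective_pi_zmod hn (f := (ψ.comp e.symm.toAddMonoidHom).comp (piIntCastAddHom m))
    (hψ.comp (e.symm.surjective.comp (piIntCastAddHom_surjective m)))

theorem exists_isPrimitive_mem_or_exists_prime_dvd {k : ℕ} (S : AddSubgroup (Fin k → ℤ)) :
    (∃ a ∈ S, IsPrimitive a) ∨ ∃ p : ℕ, p.Prime ∧ ∀ s ∈ S, ∀ j, (p : ℤ) ∣ s j := by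
  obtain ⟨b, d, hd⟩ :=
    Submodule.exists_basis_mem_iff_forall_dvd_repr (Pi.basisFun ℤ (Fin k)) S.toIntSubmodule
  set G := Finset.univ.gcd d
  by_cases hG : G = 1
  · left
    obtain ⟨w, hw⟩ := Finset.gcd_eq_sum_mul Finset.univ d
    refine ⟨∑ i, d i • b i, (hd _).2 fun i => by rw [b.repr_sum_self], ?_⟩
    refine ⟨(∑ i, w i • b.coord i).toAddMonoidHom, ?_⟩
    simp only [LinearMap.toAddMonoidHom_coe, LinearMap.sum_apply, LinearMap.smul_apply,
      Basis.coord_apply, b.repr_sum_self, smul_eq_mul]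
    rw [← hG, show G = _ from hw]
    exact Finset.sum_congr rfl fun i _ => mul_comm _ _
  · right
    have hG0 : 0 ≤ G := Int.nonneg_of_normalize_eq_self (Finset.normalize_gcd)
    have hp := Nat.minFac_prime (n := G.natAbs) (by omega)
    refine ⟨_, hp, fun s hs j => ?_⟩
    have hpd : ∀ i, (G.natAbs.minFac : ℤ) ∣ b.repr s i := fun i =>
      (Int.natCast_dvd.2 (Nat.minFac_dvd _)).trans
        ((Finset.gcd_dvd (Finset.mem_univ i)).trans ((hd s).1 hs i))
    rw [← b.sum_repr s, Finset.sum_apply]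
    exact Finset.dvd_sum fun i _ => (hpd i).mul_right _

theorem exists_surjective_of_isPrimitive_mem_ker {k : ℕ} {A : Type*} [AddCommGroup A]
    {π : (Fin k → ℤ) →+ A} (hπ : Function.Surjective π) {a : Fin k → ℤ} (ha : IsPrimitive a)
    (haπ : π a = 0) : ∃ r < k, ∃ π' : (Fin r → ℤ) →+ A, Function.Surjective π' := by
  obtain ⟨g, hg⟩ := ha
  set K := LinearMap.ker g.toIntLinearMap
  have hg_surj : Function.Surjective g.toIntLinearMap := fun n =>
    ⟨n • a, by rw [AddMonoidHom.coe_toIntLinearMap, map_zsmul, hg, smul_eq_mul, mul_one]⟩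
  have hK : finrank ℤ K + 1 = k := by
    have := K.finrank_quotient_add_finrank
    rw [(g.toIntLinearMap.quotKerEquivOfSurjective hg_surj).finrank_eq] at this
    simpa [add_comm] using this
  have hπK : Function.Surjective (π.comp K.subtype.toAddMonoidHom) := fun x => by
    obtain ⟨y, rfl⟩ := hπ x
    refine ⟨⟨y - g y • a, ?_⟩, ?_⟩
    · show g (y - g y • a) = 0
      rw [map_sub, map_zsmul, hg, smul_eq_mul, mul_one, sub_self]
    · show π (y - g y • a) = π y
      rw [map_sub, map_zsmul, haπ, smul_zero, sub_zero]
  exact ⟨finrank ℤ K, by omega, (π.comp K.subtype.toAddMonoidHom).comp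
    (finBasis ℤ K).equivFun.symm.toLinearMap.toAddMonoidHom,
    hπK.comp (finBasis ℤ K).equivFun.symm.surjective⟩

/-- Given a short exact sequence `0 → S → ℤᵏ → A → 0` of abelian groups, the number of
invariant factors of `A` is strictly smaller than `k` iff `S` contains an element which
is primitive in `ℤᵏ`. -/
theorem invariantFactorCount_lt_iff_exists_primitive
    (k : ℕ) (A : Type*) [AddCommGroup A] (S : AddSubgroup (Fin k → ℤ))
    (π : (Fin k → ℤ) →+ A) (hsurj : Function.Surjective π) (hker : π.ker = S) :
    invariantFactorCount A < k ↔ ∃ a ∈ S, IsPrimitive a := by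
  subst hker
  constructor
  · intro hlt
    refine (exists_isPrimitive_mem_or_exists_prime_dvd π.ker).resolve_right ?_
    rintro ⟨p, hp, hpS⟩
    obtain ⟨ψ, hψ⟩ := AddMonoidHom.exists_surjective_of_ker_le hsurj
      (piIntCastAddHom_surjective fun _ => p) fun s hs => mem_ker_piIntCastAddHom.2 (hpS s hs)
    have := (hasInvariantFactorDecomposition_invariantFactorCount
      (hasInvariantFactorDecomposition_of_surjective hsurj)).le_of_surjective hp.one_lt hψ
    omega
  · rintro ⟨a, ha, hprim⟩
    obtain ⟨r, hr, π', hπ'⟩ := exists_surjective_of_isPrimitive_mem_ker hsurj hprim ha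
    exact (invariantFactorCount_le (hasInvariantFactorDecomposition_of_surjective hπ')).trans_lt hr
end

section
/- Let $X$ and $Y$ be topological spaces with basepoints $x_0 \in X$, $y_0 \in Y$. The wedge sum $X \vee Y$ has the fixed point property if and only if both $X$ and $Y$ have the fixed point property, provided $X$ and $Y$ each have the property that the basepoint inclusion admits a retraction (e.g., they are path-connected polyhedra, so that $X$ and $Y$ are retracts of $X \vee Y$). -/
/-- A topological space has the fixed point property if every continuous
self-map has a fixed point. -/
def HasFixedPointProperty (X : Type*) [TopologicalSpace X] : Prop :=
  ∀ f : X → X, Continuous f → ∃ x, f x = x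

/-- The wedge sum `X ∨ Y`: the quotient of the disjoint union `X ⊕ Y`
identifying the basepoints `x₀` and `y₀`. -/
def WedgeSum {X Y : Type*} (x₀ : X) (y₀ : Y) : Type _ :=
  Quot (fun a b : X ⊕ Y => a = Sum.inl x₀ ∧ b = Sum.inr y₀)

instance {X Y : Type*} [TopologicalSpace X] [TopologicalSpace Y] (x₀ : X) (y₀ : Y) :
    TopologicalSpace (WedgeSum x₀ y₀) :=
  instTopologicalSpaceQuot

/-!
A retract of a space with the fixed point property inherits it, since a fixed point of
`i ∘ f ∘ r` retracts to a fixed point of `f`; both summands are retracts of `X ∨ Y`.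
Conversely, given `f` on `X ∨ Y`, take fixed points `x` of `r_X ∘ f ∘ i_X` and `y` of
`r_Y ∘ f ∘ i_Y`. If `f` moves `i_X x`, then `f (i_X x)` lies in `Y`, which forces `x = x₀`;
likewise for `y`. So if neither is fixed, `f` sends the wedge point into both `X` and `Y`,
that is, to the wedge point itself.
-/

theorem HasFixedPointProperty.of_leftInverse {X Y : Type*} [TopologicalSpace X]
    [TopologicalSpace Y] (hY : HasFixedPointProperty Y) {i : X → Y} {r : Y → X}
    (hi : Continuous i) (hr : Continuous r) (hri : Function.LeftInverse r i) :
    HasFixedPointProperty X := by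
  intro f hf
  obtain ⟨y, hy⟩ := hY (i ∘ f ∘ r) (hi.comp (hf.comp hr))
  exact ⟨r y, by rw [← hri (f (r y))]; exact congrArg r hy⟩

namespace WedgeSum

variable {X Y : Type*} {x₀ : X} {y₀ : Y}

def inl (x : X) : WedgeSum x₀ y₀ := Quot.mk _ (Sum.inl x)

def inr (y : Y) : WedgeSum x₀ y₀ := Quot.mk _ (Sum.inr y)

def retractLeft : WedgeSum x₀ y₀ → X :=
  Quot.lift (Sum.elim id fun _ => x₀) (by rintro _ _ ⟨rfl, rfl⟩; rfl)

def retractRight : WedgeSum x₀ y₀ → Y :=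
  Quot.lift (Sum.elim (fun _ => y₀) id) (by rintro _ _ ⟨rfl, rfl⟩; rfl)

@[simp]
theorem retractLeft_inl (x : X) : retractLeft (inl x : WedgeSum x₀ y₀) = x := rfl

@[simp]
theorem retractLeft_inr (y : Y) : retractLeft (inr y : WedgeSum x₀ y₀) = x₀ := rfl

@[simp]
theorem retractRight_inl (x : X) : retractRight (inl x : WedgeSum x₀ y₀) = y₀ := rfl

@[simp]
theorem retractRight_inr (y : Y) : retractRight (inr y : WedgeSum x₀ y₀) = y := rfl

theorem inl_basepoint_eq_inr_basepoint : (inl x₀ : WedgeSum x₀ y₀) = inr y₀ :=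
  Quot.sound ⟨rfl, rfl⟩

theorem eq_inl_retractLeft_or_eq_inr_retractRight (w : WedgeSum x₀ y₀) :
    w = inl (retractLeft w) ∨ w = inr (retractRight w) := by
  induction w using Quot.ind with
  | mk s => cases s with
    | inl x => exact Or.inl rfl
    | inr y => exact Or.inr rfl

theorem exists_fixed_of_retract_fixed (f : WedgeSum x₀ y₀ → WedgeSum x₀ y₀) {x : X} {y : Y}
    (hx : retractLeft (f (inl x)) = x) (hy : retractRight (f (inr y)) = y) :
    ∃ w, f w = w := by
  rcases eq_inl_retractLeft_or_eq_inr_retractRight (f (inl x)) with hfx | hfx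
  · exact ⟨inl x, hfx.trans (congrArg inl hx)⟩
  rcases eq_inl_retractLeft_or_eq_inr_retractRight (f (inr y)) with hfy | hfy
  · have hx₀ : x = x₀ := by rw [← hx, hfx, retractLeft_inr]
    have hy₀ : y = y₀ := by rw [← hy, hfy, retractRight_inl]
    subst hx₀ hy₀
    have hbase : f (inr y) = f (inl x) := congrArg f inl_basepoint_eq_inr_basepoint.symm
    refine ⟨inl x, ?_⟩
    calc f (inl x) = inl (retractLeft (f (inr y))) := hbase ▸ hfy
      _ = inl x := by rw [hbase, hfx, retractLeft_inr]
  · exact ⟨inr y, hfy.trans (congrArg inr hy)⟩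

variable [TopologicalSpace X] [TopologicalSpace Y]

theorem continuous_inl : Continuous (inl : X → WedgeSum x₀ y₀) :=
  continuous_quot_mk.comp _root_.continuous_inl

theorem continuous_inr : Continuous (inr : Y → WedgeSum x₀ y₀) :=
  continuous_quot_mk.comp _root_.continuous_inr

theorem continuous_retractLeft : Continuous (retractLeft : WedgeSum x₀ y₀ → X) :=
  continuous_quot_lift _ (continuous_id.sumElim continuous_const)

theorem continuous_retractRight : Continuous (retractRight : WedgeSum x₀ y₀ → Y) :=
  continuous_quot_lift _ (continuous_const.sumElim continuous_id)

end WedgeSum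

open WedgeSum in
theorem HasFixedPointProperty.wedgeSum {X Y : Type*} [TopologicalSpace X] [TopologicalSpace Y]
    (hX : HasFixedPointProperty X) (hY : HasFixedPointProperty Y) (x₀ : X) (y₀ : Y) :
    HasFixedPointProperty (WedgeSum x₀ y₀) := by
  intro f hf
  obtain ⟨x, hx⟩ := hX (retractLeft ∘ f ∘ inl) (continuous_retractLeft.comp (hf.comp continuous_inl))
  obtain ⟨y, hy⟩ :=
    hY (retractRight ∘ f ∘ inr) (continuous_retractRight.comp (hf.comp continuous_inr))
  exact exists_fixed_of_retract_fixed f hx hy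

open WedgeSum in
theorem wedgeSum_hasFixedPointProperty_iff_general
    {X Y : Type*} [TopologicalSpace X] [TopologicalSpace Y] (x₀ : X) (y₀ : Y) :
    HasFixedPointProperty (WedgeSum x₀ y₀) ↔
      HasFixedPointProperty X ∧ HasFixedPointProperty Y :=
  ⟨fun h => ⟨h.of_leftInverse continuous_inl continuous_retractLeft retractLeft_inl,
      h.of_leftInverse continuous_inr continuous_retractRight retractRight_inr⟩,
    fun ⟨hX, hY⟩ => hX.wedgeSum hY x₀ y₀⟩

/-- For compact Hausdorff path-connected spaces `X` and `Y` (so that each of `X` and `Y` is a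
retract of `X ∨ Y`), the wedge sum `X ∨ Y` has the fixed point property if and only if both
`X` and `Y` have the fixed point property. -/
theorem wedgeSum_hasFixedPointProperty_iff
    {X Y : Type*} [TopologicalSpace X] [TopologicalSpace Y]
    [CompactSpace X] [CompactSpace Y] [T2Space X] [T2Space Y]
    [PathConnectedSpace X] [PathConnectedSpace Y] (x₀ : X) (y₀ : Y) :
    HasFixedPointProperty (WedgeSum x₀ y₀) ↔
      HasFixedPointProperty X ∧ HasFixedPointProperty Y :=
  wedgeSum_hasFixedPointProperty_iff_general x₀ y₀
end
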